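/- arXiv:1011.6283 — 2 statements merged into one kernel-verified Lean document; each statement's English description precedes it below -/
import Mathlib

section
/- Let p be an odd prime, K = Q(ζ_p), and suppose the p-part A^+ of the class group of the maximal real subfield K^+ is cyclic and nontrivial of order d. Let H^+ be the unramified abelian extension of K with Gal(H^+/K) ≅ A^+ (the lift of the p-Hilbert class field of K^+). Then no primitive p-th root of unity ζ_p is a norm from E(H^+): ζ_p ∉ N_{H^+/K}(E(H^+)). -/
open NumberField

def UnramifiedAtFinitePrimes (K L : Type*) [Field K] [NumberField K] [Field L] [NumberField L]
    [Algebra K L] : Prop :=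
  ∀ P : Ideal (𝓞 L), P.IsMaximal →
    Ideal.ramificationIdx'
      (P.comap (algebraMap (𝓞 K) (𝓞 L))) P = 1

def UnramifiedAtInfinitePlaces (K L : Type*) [Field K] [NumberField K] [Field L] [NumberField L]
    [Algebra K L] : Prop :=
  ∀ w : InfinitePlace L, (w.comap (algebraMap K L)).IsReal → w.IsReal

/-! If `ζ = N(u)` for a unit `u` of `H`, then `ε = u / ū` has absolute value `1` under every
complex embedding, so it is a root of unity, and `N(ε) = ζ / ζ̄ = ζ²`. Since `H / K` is
unramified, `ε` has no component of order `p²`: if `σ ^ p = ζ` with `σ` of `p`-power order, then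
`σ ≡ 1` modulo any prime `P` above the prime `(ζ - 1)` (the residue field has characteristic `p`),
so `ζ - 1 = (σ - 1)(1 + σ + ⋯ + σ ^ (p - 1)) ∈ P²` and `P` ramifies. Hence the `p`-part of `ε` is a
`p`-th root of unity, so it lies in `K` and its norm is its `d`-th power, which is `1` as `p ∣ d`.
But that norm is also `ζ ^ (2m)` with `p ∤ m`, which is not `1` as `p` is odd. -/

theorem Ideal.ramificationIdx'_ne_one_of_map_le_sq {R S : Type*} [CommRing R] [CommRing S]
    [Algebra R S] {q : Ideal R} {P : Ideal S} (h : q.map (algebraMap R S) ≤ P ^ 2) :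
    q.ramificationIdx' P ≠ 1 := by
  intro h1
  by_cases hb : BddAbove {n | q.map (algebraMap R S) ≤ P ^ n}
  · have : 2 ≤ q.ramificationIdx' P := le_csSup hb h
    omega
  · rw [Ideal.ramificationIdx', csSup_of_not_bddAbove hb, csSup_empty] at h1
    exact zero_ne_one h1

theorem pow_sub_one_mem_sq_of_pow_eq_one {R : Type*} [CommRing R] {P : Ideal R} [P.IsPrime]
    {p : ℕ} [hp : Fact p.Prime] (hpP : (p : R) ∈ P) {σ : R} {k : ℕ} (hσ : σ ^ p ^ k = 1) :
    σ ^ p - 1 ∈ P ^ 2 := by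
  have : CharP (R ⧸ P) p := (CharP.charP_iff_prime_eq_zero hp.out).mpr
    (by rwa [← map_natCast (Ideal.Quotient.mk P), Ideal.Quotient.eq_zero_iff_mem])
  have hσ1 : Ideal.Quotient.mk P σ = 1 := by
    rw [← sub_eq_zero, ← pow_eq_zero_iff (pow_ne_zero k hp.out.ne_zero), sub_pow_char_pow,
      ← map_pow, hσ, map_one, one_pow, sub_self]
  have hgeom : ∑ i ∈ Finset.range p, σ ^ i ∈ P := by
    rw [← Ideal.Quotient.eq_zero_iff_mem, map_sum]
    simp [hσ1]
  have hσP : σ - 1 ∈ P := by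
    rw [← Ideal.Quotient.eq_zero_iff_mem, map_sub, hσ1, map_one, sub_self]
  rw [← geom_sum_mul, sq]
  exact Ideal.mul_mem_mul hgeom hσP

theorem Algebra.norm_eq_one_of_pow_eq_one {K L : Type*} [Field K] [Field L] [Algebra K L]
    {p : ℕ} [NeZero p] {ζ : K} (hζ : IsPrimitiveRoot ζ p) (hp : p ∣ Module.finrank K L) {y : L}
    (hy : y ^ p = 1) : Algebra.norm K y = 1 := by
  obtain ⟨i, -, rfl⟩ := (hζ.map_of_injective (algebraMap K L).injective).eq_pow_of_pow_eq_one hy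
  rw [← map_pow, Algebra.norm_algebraMap, ← pow_mul, hζ.pow_eq_one_iff_dvd]
  exact dvd_mul_of_dvd_right hp i

namespace UnramifiedAtFinitePrimes

variable {p : ℕ} [hp : Fact p.Prime] {K H : Type*} [Field K] [NumberField K] [Field H]
  [NumberField H] [Algebra K H] [IsCyclotomicExtension {p} ℚ K]

theorem pow_ne_algebraMap_toInteger (hunram : UnramifiedAtFinitePrimes K H) {ζ : K}
    (hζ : IsPrimitiveRoot ζ p) {σ : 𝓞 H} {k : ℕ} (hσ : σ ^ p ^ k = 1) :
    σ ^ p ≠ algebraMap (𝓞 K) (𝓞 H) hζ.toInteger := by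
  intro hσζ
  have hprime := hζ.zeta_sub_one_prime'
  set q := Ideal.span {hζ.toInteger - 1}
  have : q.IsMaximal := ((Ideal.span_singleton_prime hprime.ne_zero).mpr hprime).isMaximal
    (by simpa [q] using hprime.ne_zero)
  obtain ⟨P, hPmax, hPq⟩ := Ideal.exists_ideal_over_maximal_of_isIntegral (S := 𝓞 H) q
    (by simp)
  have hpP : (p : 𝓞 H) ∈ P := by
    have : (p : 𝓞 K) ∈ q := Ideal.mem_span_singleton.mpr hζ.toInteger_sub_one_dvd_prime'
    rwa [← hPq, Ideal.mem_comap, map_natCast] at this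
  have hmap : q.map (algebraMap (𝓞 K) (𝓞 H)) ≤ P ^ 2 := by
    rw [Ideal.map_span, Set.image_singleton, Ideal.span_le, Set.singleton_subset_iff, map_sub,
      map_one, ← hσζ]
    exact pow_sub_one_mem_sq_of_pow_eq_one hpP hσ
  exact Ideal.ramificationIdx'_ne_one_of_map_le_sq hmap (hPq ▸ hunram P hPmax)

theorem pow_eq_one_of_pow_pow_eq_one (hunram : UnramifiedAtFinitePrimes K H) {y : H} {k : ℕ}
    (hy : y ^ p ^ k = 1) : y ^ p = 1 := by
  induction k generalizing y with
  | zero => simp_all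
  | succ k ih =>
    have hy2 : y ^ p ^ 2 = 1 := by
      rw [sq, pow_mul]
      exact ih (by rw [← pow_mul, ← pow_succ']; exact hy)
    by_contra hne
    have : NeZero p := ⟨hp.out.ne_zero⟩
    have hw : IsPrimitiveRoot (y ^ p) p := by
      have := IsPrimitiveRoot.orderOf (y ^ p)
      rwa [orderOf_eq_prime (by rwa [← pow_mul, ← sq]) hne] at this
    have hζ := IsCyclotomicExtension.zeta_spec p ℚ K
    obtain ⟨j, -, hj⟩ :=
      hw.eq_pow_of_pow_eq_one (hζ.map_of_injective (algebraMap K H).injective).pow_eq_one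
    have hyj : (y ^ j) ^ p ^ 2 = 1 := by rw [← pow_mul, mul_comm, pow_mul, hy2, one_pow]
    let σ : 𝓞 H := ⟨y ^ j, IsIntegral.of_pow (pow_pos hp.out.pos 2) (hyj ▸ isIntegral_one)⟩
    refine hunram.pow_ne_algebraMap_toInteger hζ (σ := σ) (k := 2) ?_ ?_
    · apply RingOfIntegers.ext
      rw [RingOfIntegers.coe_eq_algebraMap, map_pow]
      exact hyj.trans (map_one _).symm
    · apply RingOfIntegers.ext
      rw [RingOfIntegers.coe_eq_algebraMap, map_pow, RingOfIntegers.coe_eq_algebraMap,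
        ← IsScalarTower.algebraMap_apply, IsScalarTower.algebraMap_apply (𝓞 K) K H]
      exact (pow_right_comm y j p).trans hj

end UnramifiedAtFinitePrimes

section Conjugation

variable {H : Type*} [Field H] [NumberField H] {conj : H ≃ₐ[ℚ] H}

theorem conj_eq_inv_of_pow_eq_one
    (hconj : ∀ (φ : H →+* ℂ) (x : H), φ (conj x) = starRingEnd ℂ (φ x))
    {y : H} {n : ℕ} (hn : n ≠ 0) (hy : y ^ n = 1) : conj y = y⁻¹ := by
  let φ := (Classical.arbitrary (InfinitePlace H)).embedding
  apply φ.injective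
  have hφy : ‖φ y‖ = 1 := Complex.norm_eq_one_of_pow_eq_one (by rw [← map_pow, hy, map_one]) hn
  rw [hconj, map_inv₀, ← Complex.inv_eq_conj hφy]

theorem exists_pow_div_conj_eq_one
    (hconj : ∀ (φ : H →+* ℂ) (x : H), φ (conj x) = starRingEnd ℂ (φ x)) (u : (𝓞 H)ˣ) :
    ∃ N, 0 < N ∧ ((u : 𝓞 H) / conj (u : 𝓞 H) : H) ^ N = 1 := by
  have hinv : ((u : 𝓞 H) : H)⁻¹ = ((u⁻¹ : (𝓞 H)ˣ) : 𝓞 H) := by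
    refine inv_eq_of_mul_eq_one_right ?_
    simp
  have hint : IsIntegral ℤ ((u : 𝓞 H) / conj (u : 𝓞 H) : H) := by
    rw [div_eq_mul_inv, ← map_inv₀, hinv]
    exact (RingOfIntegers.isIntegral_coe _).mul
      (map_isIntegral_int conj (RingOfIntegers.isIntegral_coe _))
  obtain ⟨N, hN, h⟩ := Embeddings.pow_eq_one_of_norm_eq_one H ℂ hint fun φ => by
    rw [map_div₀, hconj, norm_div, Complex.norm_conj, div_self]
    simp
  exact ⟨N, hN, h⟩

variable {K : Type*} [Field K] [CharZero K] [Algebra K H] [Normal ℚ K] [IsScalarTower ℚ K H]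

theorem Algebra.norm_conj (x : H) :
    Algebra.norm K (conj x) = conj.restrictNormal K (Algebra.norm K x) := by
  rw [Algebra.norm_eq_of_equiv_equiv (conj.restrictNormal K).toRingEquiv conj.toRingEquiv
    (RingHom.ext fun k => AlgEquiv.restrictNormal_commutes conj K k) x]
  simp

theorem norm_div_conj_eq_sq [FiniteDimensional K H]
    (hconj : ∀ (φ : H →+* ℂ) (x : H), φ (conj x) = starRingEnd ℂ (φ x))
    {x : H} {z : K} {n : ℕ} (hn : n ≠ 0) (hz : z ^ n = 1) (hx : Algebra.norm K x = z) :
    Algebra.norm K (x / conj x) = z ^ 2 := by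
  have hconjz : conj.restrictNormal K z = z⁻¹ := by
    apply (algebraMap K H).injective
    rw [AlgEquiv.restrictNormal_commutes, map_inv₀]
    exact conj_eq_inv_of_pow_eq_one hconj hn (by rw [← map_pow, hz, map_one])
  rw [div_eq_mul_inv, map_mul, Algebra.norm_inv, Algebra.norm_conj, hx, hconjz, inv_inv, sq]

end Conjugation

theorem statement6_general
    (p : ℕ+) [hp : Fact (p : ℕ).Prime] (hodd : (p : ℕ) ≠ 2)
    (K H : Type*) [Field K] [NumberField K]
    [Field H] [NumberField H]
    [IsCyclotomicExtension {(p : ℕ)} ℚ K]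
    -- `A⁺`, the `p`-part of `Cl(K⁺)`, is cyclic of order `d = p^a > 1`:
    (d a : ℕ) (hd : d = (p : ℕ) ^ a) (ha : 1 ≤ a)
    -- `H` is the lift `H⁺ = K ⬝ H(K⁺)` of the `p`-Hilbert class field of `F = K⁺`;
    -- it is a cyclic unramified extension of `K` of degree `d`, with
    -- `Gal(H/K) ≅ A⁺`, and `H` is a CM field:
    [Algebra K H] [IsGalois K H]
    (hHdeg : Nat.card (H ≃ₐ[K] H) = d)
    (hunramfin : UnramifiedAtFinitePrimes K H)
    (conj : H ≃ₐ[ℚ] H)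
    (hconj : ∀ (φ : H →+* ℂ) (x : H), φ (conj x) = starRingEnd ℂ (φ x))
    -- `ζ` is a primitive `p`-th root of unity in `K`:
    (ζ : 𝓞 K) (hζ : IsPrimitiveRoot ζ p) :
    ∀ u : (𝓞 H)ˣ, RingOfIntegers.norm K (u : 𝓞 H) ≠ ζ := by
  intro u hu
  have : IsScalarTower ℚ K H := IsScalarTower.of_algebraMap_eq' (Subsingleton.elim _ _)
  have : Normal ℚ K := (IsCyclotomicExtension.isGalois {(p : ℕ)} ℚ K).to_normal
  have hz : IsPrimitiveRoot (ζ : K) p := hζ.map_of_injective RingOfIntegers.coe_injective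
  have hdeg : (p : ℕ) ∣ Module.finrank K H := by
    rw [← IsGalois.card_aut_eq_finrank, hHdeg, hd]
    exact dvd_pow_self _ (by omega)
  set ε : H := (u : 𝓞 H) / conj (u : 𝓞 H)
  have hnorm : Algebra.norm K ε = (ζ : K) ^ 2 :=
    norm_div_conj_eq_sq hconj p.ne_zero hz.pow_eq_one (by rw [← RingOfIntegers.coe_norm, hu])
  obtain ⟨N, hN, hεN⟩ := exists_pow_div_conj_eq_one hconj u
  set m := ordCompl[p] N
  have hroot : (ε ^ m) ^ (p : ℕ) = 1 := by
    refine hunramfin.pow_eq_one_of_pow_pow_eq_one (k := N.factorization p) ?_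
    rw [← pow_mul, mul_comm, Nat.ordProj_mul_ordCompl_eq_self, hεN]
  have hzm : (ζ : K) ^ (2 * m) = 1 := by
    rw [pow_mul, ← hnorm, ← map_pow, Algebra.norm_eq_one_of_pow_eq_one hz hdeg hroot]
  rcases (Nat.Prime.dvd_mul hp.out).mp (hz.dvd_of_pow_eq_one _ hzm) with h | h
  · exact hodd ((Nat.prime_dvd_prime_iff_eq hp.out Nat.prime_two).mp h)
  · exact Nat.not_dvd_ordCompl hp.out hN.ne' h

/-- Let `p` be an odd prime, `K = ℚ(ζ_p)` with maximal real subfield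
`F = K⁺`, and suppose the `p`-part `A⁺` of the class group of `F` is cyclic and nontrivial
of order `d = p^a`.  Let `H⁺` be the unramified (cyclic) extension of `K` of degree `d`
with `Gal(H⁺/K) ≅ A⁺` — the lift of the `p`-Hilbert class field of `K⁺` — which is a CM
field.  Then no primitive `p`-th root of unity is a norm of a unit:
`ζ_p ∉ N_{H⁺/K}(E(H⁺))`. -/
theorem statement6
    (p : ℕ+) [hp : Fact (p : ℕ).Prime] (hodd : (p : ℕ) ≠ 2)
    (F K H : Type*) [Field F] [NumberField F] [Field K] [NumberField K]
    [Field H] [NumberField H]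
    [IsCyclotomicExtension {(p : ℕ)} ℚ K]
    -- `F = K⁺` is the maximal real subfield of `K`:
    [Algebra F K] (hFreal : ∀ v : InfinitePlace F, v.IsReal)
    (hKimag : ∀ w : InfinitePlace K, ¬ w.IsReal)
    (hFK : Module.finrank F K = 2)
    -- `A⁺`, the `p`-part of `Cl(K⁺)`, is cyclic of order `d = p^a > 1`:
    (d a : ℕ) (hd : d = (p : ℕ) ^ a) (ha : 1 ≤ a)
    (hcyc : ∀ P : Sylow (p : ℕ) (ClassGroup (𝓞 F)), IsCyclic P ∧ Nat.card P = d)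
    -- `H` is the lift `H⁺ = K ⬝ H(K⁺)` of the `p`-Hilbert class field of `F = K⁺`;
    -- it is a cyclic unramified extension of `K` of degree `d`, with
    -- `Gal(H/K) ≅ A⁺`, and `H` is a CM field:
    [Algebra K H] [IsGalois K H] [FiniteDimensional K H]
    (hHcyc : IsCyclic (H ≃ₐ[K] H)) (hHdeg : Nat.card (H ≃ₐ[K] H) = d)
    (hgal : ∀ P : Sylow (p : ℕ) (ClassGroup (𝓞 F)), Nonempty ((H ≃ₐ[K] H) ≃* P))
    (hunramfin : UnramifiedAtFinitePrimes K H)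
    (hunraminf : UnramifiedAtInfinitePlaces K H)
    (hHimag : ∀ w : InfinitePlace H, ¬ w.IsReal)
    (conj : H ≃ₐ[ℚ] H)
    (hconj : ∀ (φ : H →+* ℂ) (x : H), φ (conj x) = starRingEnd ℂ (φ x))
    -- `ζ` is a primitive `p`-th root of unity in `K`:
    (ζ : 𝓞 K) (hζ : IsPrimitiveRoot ζ p) :
    ∀ u : (𝓞 H)ˣ, RingOfIntegers.norm K (u : 𝓞 H) ≠ ζ :=
  statement6_general p (hp := hp) hodd K H d a hd ha hHdeg hunramfin conj hconj ζ hζ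
end

section
/- Let G be a finite cyclic p-group with generator σ acting on a finite abelian p-group B, s = σ − 1, and N = Σ_{g∈G} g the norm element. If N·B = 0 and ker(N acting on B) ⊆ s·B, then B = 0. -/
open Polynomial

/-- In `ℤ[X]`, `(X - 1)^(p^l)` differs from `X^(p^l) - 1` by a multiple of `p`. -/
lemma statement16_aux (p : ℕ) (hp : p.Prime) (l : ℕ) :
    ∃ Q : Polynomial ℤ, ((X : Polynomial ℤ) - 1) ^ (p ^ l) =
      X ^ (p ^ l) - 1 + C (p : ℤ) * Q := by
  haveI : Fact p.Prime := ⟨hp⟩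
  set P : Polynomial ℤ := (X - 1) ^ (p ^ l) - (X ^ (p ^ l) - 1) with hP
  have hmap : P.map (Int.castRingHom (ZMod p)) = 0 := by
    simp only [hP, Polynomial.map_sub, Polynomial.map_pow, Polynomial.map_one,
      Polynomial.map_X]
    rw [sub_pow_char_pow (R := Polynomial (ZMod p))]
    simp
  have hdvd : (C (p : ℤ)) ∣ P := by
    rw [C_dvd_iff_dvd_coeff]
    intro i
    have : (P.coeff i : ZMod p) = 0 := by
      have := congrArg (fun q => Polynomial.coeff q i) hmap
      simpa using this
    exact_mod_cast (ZMod.intCast_zmod_eq_zero_iff_dvd _ _).mp this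
  obtain ⟨Q, hQ⟩ := hdvd
  exact ⟨Q, by rw [← hQ]; ring⟩

/-- Let `G` be a finite cyclic `p`-group with generator `σ` acting on
a finite abelian `p`-group `B`, let `s = σ - 1` and `N = ∑_{g ∈ G} g` the norm element.
If `N ⬝ B = 0` and `ker(N on B) ⊆ s ⬝ B`, then `B = 0`. -/
theorem statement16
    (p : ℕ) (hp : p.Prime)
    (G : Type*) [Group G] [Fintype G]
    (σ : G) (hσ : ∀ g : G, g ∈ Subgroup.zpowers σ)
    (hG : ∃ l : ℕ, Nat.card G = p ^ l)
    (B : Type*) [AddCommGroup B] [Finite B]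
    (hB : ∃ k : ℕ, Nat.card B = p ^ k)
    [DistribMulAction G B]
    -- `N ⬝ B = 0`:
    (hN : ∀ b : B, (∑ g : G, g • b) = 0)
    -- `ker(N) ⊆ s ⬝ B`:
    (hker : ∀ b : B, (∑ g : G, g • b) = 0 → ∃ c : B, b = σ • c - c) :
    ∀ b : B, b = 0 := by
  obtain ⟨l, hl⟩ := hG
  obtain ⟨k, hk⟩ := hB
  -- the endomorphism given by σ
  set e : AddMonoid.End B := DistribMulAction.toAddMonoidEnd G B σ with he
  set f : AddMonoid.End B := e - 1 with hf
  have hfapp : ∀ c : B, f c = σ • c - c := fun c => rfl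
  -- f is surjective
  have hsurj : Function.Surjective f := by
    intro b
    obtain ⟨c, hc⟩ := hker b (hN b)
    exact ⟨c, (hfapp c).trans hc.symm⟩
  -- e ^ (p ^ l) = 1
  have hepow : e ^ (p ^ l) = 1 := by
    rw [he, ← map_pow, ← hl, pow_card_eq_one', map_one]
  -- f ^ (p ^ l) = p * q for some q
  obtain ⟨Q, hQ⟩ := statement16_aux p hp l
  have hfe : f ^ (p ^ l) = algebraMap ℤ (AddMonoid.End B) (p : ℤ) * aeval e Q := by
    have := congrArg (aeval e) hQ
    simp only [map_add, map_sub, map_pow, map_mul, map_one, aeval_X, aeval_C] at this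
    rw [hf, this, hepow, sub_self, zero_add]
  -- hence f ^ (p^l * k) = 0
  have hnil : f ^ (p ^ l * k) = 0 := by
    refine AddMonoidHom.ext fun b => ?_
    have h1 : f ^ (p ^ l * k) = algebraMap ℤ (AddMonoid.End B) ((p : ℤ) ^ k) * (aeval e Q) ^ k := by
      rw [pow_mul, hfe,
        (Commute.mul_pow (by exact (Algebra.commutes ((p:ℤ)) (aeval e Q)) : Commute _ _) k), map_pow]
    rw [h1]
    show (algebraMap ℤ (AddMonoid.End B) ((p : ℤ) ^ k)) (((aeval e Q) ^ k) b) = (0 : AddMonoid.End B) b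
    rw [algebraMap_int_eq, eq_intCast, AddMonoid.End.intCast_apply]
    have h2 : ((p : ℤ) ^ k) = ((p ^ k : ℕ) : ℤ) := by push_cast; ring
    rw [h2, natCast_zsmul, ← hk, card_nsmul_eq_zero']
    rfl
  -- f ^ n surjective
  have hsurjn : Function.Surjective (f ^ (p ^ l * k) : AddMonoid.End B) := by
    induction (p ^ l * k) with
    | zero => intro b; exact ⟨b, rfl⟩
    | succ n ih =>
      intro b
      obtain ⟨c, hc⟩ := hsurj b
      obtain ⟨d, hd⟩ := ih c
      refine ⟨d, ?_⟩
      rw [pow_succ']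
      show f ((f ^ n) d) = b
      rw [hd, hc]
  intro b
  obtain ⟨c, hc⟩ := hsurjn b
  rw [← hc, hnil]
  rfl
end
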